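/- arXiv:2305.05448 — 2 statements merged into one kernel-verified Lean document; each statement's English description precedes it below -/
import Mathlib

section
/- Suppose (r,u) follows the weight-normalized gradient flow with ‖u(0)‖₂ = 1, and set x(t) = (r(t)/‖u(t)‖₂) u(t). Let t₀ ≥ 0 and T ≥ t₀. Suppose there are constants c_r, c_u, c_x > 0 and an index set I ⊆ {1,…,N} such that η_r(t) ≥ c_r, η_u(t) ≥ c_u, and |x_n(t)| ≥ c_x for all n ∈ I and all t ∈ [t₀, T]. If the submatrix A|_I of A (columns indexed by I) has full rank with smallest singular value σ_min(A|_I), then for all t ∈ [t₀, T], 𝓛(x(t)) ≤ 𝓛(x(t₀)) · exp(−min(c_r, c_u c_x² |I|) · 2L c_x^{2L−2} σ_min²(A|_I) · (t − t₀)). -/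
open Filter Topology

noncomputable section

variable {M N : ℕ}

/-- Entrywise (Hadamard) natural power `x^{⊙L}`. -/
def hadPow (x : Fin N → ℝ) (L : ℕ) : Fin N → ℝ := fun n => x n ^ L

/-- Euclidean (ℓ2) norm of a vector. -/
def eucNorm (u : Fin N → ℝ) : ℝ := Real.sqrt (∑ n, u n ^ 2)

/-- The loss `𝓛(x) = (1/(2L)) ‖A x^{⊙L} − b‖₂²`. -/
def loss (A : Matrix (Fin M) (Fin N) ℝ) (b : Fin M → ℝ) (L : ℕ) (x : Fin N → ℝ) : ℝ :=
  (1 / (2 * (L : ℝ))) * ∑ m, (A.mulVec (hadPow x L) m - b m) ^ 2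

/-- The gradient `∇𝓛(x) = [Aᵀ(A x^{⊙L} − b)] ⊙ x^{⊙(L−1)}`. -/
def gradLoss (A : Matrix (Fin M) (Fin N) ℝ) (b : Fin M → ℝ) (L : ℕ) (x : Fin N → ℝ) :
    Fin N → ℝ :=
  fun n => A.transpose.mulVec (A.mulVec (hadPow x L) - b) n * x n ^ (L - 1)

/-- The weight-normalized vector `x = (r/‖u‖₂) u`. -/
def normVec (r : ℝ) (u : Fin N → ℝ) : Fin N → ℝ := (r / eucNorm u) • u

/-- `∇_r 𝓛̃(r,u) = (uᵀ/‖u‖₂) ∇𝓛((r/‖u‖₂)u)`. -/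
def gradR (A : Matrix (Fin M) (Fin N) ℝ) (b : Fin M → ℝ) (L : ℕ) (r : ℝ)
    (u : Fin N → ℝ) : ℝ :=
  ∑ n, (u n / eucNorm u) * gradLoss A b L (normVec r u) n

/-- `∇_u 𝓛̃(r,u) = (r/‖u‖₂)(I − uuᵀ/‖u‖₂²) ∇𝓛((r/‖u‖₂)u)`. -/
def gradU (A : Matrix (Fin M) (Fin N) ℝ) (b : Fin M → ℝ) (L : ℕ) (r : ℝ)
    (u : Fin N → ℝ) : Fin N → ℝ :=
  fun n => (r / eucNorm u) * (gradLoss A b L (normVec r u) n -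
    (∑ k, u k * gradLoss A b L (normVec r u) k) / eucNorm u ^ 2 * u n)

/-- Weight-normalized gradient flow with (possibly time-dependent) learning rates
`(η_r, η_u)`: `∂ₜ r = −η_r ∇_r 𝓛̃(r,u)`, `∂ₜ u = −η_u ∇_u 𝓛̃(r,u)` for `t ≥ 0`. -/
def WNFlow (A : Matrix (Fin M) (Fin N) ℝ) (b : Fin M → ℝ) (L : ℕ)
    (ηr ηu : ℝ → ℝ) (r : ℝ → ℝ) (u : ℝ → Fin N → ℝ) : Prop :=
  (∀ t, 0 ≤ t → HasDerivAt r (-(ηr t * gradR A b L (r t) (u t))) t) ∧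
  (∀ t, 0 ≤ t → ∀ n, HasDerivAt (fun s => u s n) (-(ηu t * gradU A b L (r t) (u t) n)) t)

/-- Plain gradient flow `∂ₜ x = −∇𝓛(x)` for `t ≥ 0`. -/
def GradFlow (A : Matrix (Fin M) (Fin N) ℝ) (b : Fin M → ℝ) (L : ℕ)
    (x : ℝ → Fin N → ℝ) : Prop :=
  ∀ t, 0 ≤ t → ∀ n, HasDerivAt (fun s => x s n) (-gradLoss A b L (x t) n) t

/-- The set of nonnegative solutions `S₊ = {z ≥ 0 : Az = b}`. -/
def Splus (A : Matrix (Fin M) (Fin N) ℝ) (b : Fin M → ℝ) : Set (Fin N → ℝ) :=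
  {z | (∀ n, 0 ≤ z n) ∧ A.mulVec z = b}

/-- Weighted ℓ1-norm `‖z‖_{w,1} = ‖w ⊙ z‖₁`. -/
def wl1 (w z : Fin N → ℝ) : ℝ := ∑ n, |w n * z n|

/-- The Moore–Penrose conditions characterizing the pseudoinverse `A†`. -/
def IsMoorePenrose (A : Matrix (Fin M) (Fin N) ℝ) (Adag : Matrix (Fin N) (Fin M) ℝ) :
    Prop :=
  A * Adag * A = A ∧ Adag * A * Adag = Adag ∧
    (A * Adag).transpose = A * Adag ∧ (Adag * A).transpose = Adag * A

/-- The potential `F` defining the Bregman divergence. -/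
def breF (L : ℕ) (p : Fin N → ℝ) : ℝ :=
  if L = 2 then (1 / 2) * ∑ n, (p n * Real.log (p n) - p n)
  else ((L : ℝ) / (2 * (2 - (L : ℝ)))) * ∑ n, p n ^ ((2 : ℝ) / (L : ℝ))

/-- The gradient of the potential `F`. -/
def breGradF (L : ℕ) (q : Fin N → ℝ) : Fin N → ℝ :=
  fun n => if L = 2 then (1 / 2) * Real.log (q n)
  else (1 / (2 - (L : ℝ))) * q n ^ ((2 : ℝ) / (L : ℝ) - 1)

/-- Bregman divergence `D_F(p,q) = F(p) − F(q) − ⟨∇F(q), p − q⟩`. -/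
def bregman (L : ℕ) (p q : Fin N → ℝ) : ℝ :=
  breF L p - breF L q - ∑ n, breGradF L q n * (p n - q n)


/-!
Since `∂ₜu` is orthogonal to `u`, the flow stays on the unit sphere `‖u‖₂ = 1`, so `x = r u`.
Writing `g = ∇𝓛(x)`, the chain rule gives
`∂ₜ 𝓛(x) = -η_r ⟪u, g⟫² - η_u r² (‖g‖² - ⟪u, g⟫²)`, which by Cauchy–Schwarz and
`r² ≥ ‖x|_I‖² ≥ c_x² |I|` is at most `-min(c_r, c_u c_x² |I|) ‖g‖²`.
A Polyak–Łojasiewicz inequality closes the estimate: restricting `g` to `I`,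
`‖g‖² ≥ c_x^{2L-2} ‖(Aᵀ(A x^{⊙L} - b))|_I‖² ≥ c_x^{2L-2} σ² · 2L 𝓛(x)`,
and Grönwall's inequality turns `∂ₜ 𝓛 ≤ -K 𝓛` into exponential decay.
-/

open Finset Real Set

theorem eucNorm_eq_one_iff {u : Fin N → ℝ} : eucNorm u = 1 ↔ ∑ n, u n ^ 2 = 1 :=
  Real.sqrt_eq_one

theorem normVec_of_eucNorm_eq_one {u : Fin N → ℝ} (hu : eucNorm u = 1) (r : ℝ) :
    normVec r u = r • u := by
  simp [normVec, hu]

section Gradients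

variable (A : Matrix (Fin M) (Fin N) ℝ) (b : Fin M → ℝ) (L : ℕ)

theorem hasDerivAt_loss (hL : L ≠ 0) {y : ℝ → Fin N → ℝ} {y' : Fin N → ℝ} {t : ℝ}
    (hy : ∀ n, HasDerivAt (fun s => y s n) (y' n) t) :
    HasDerivAt (fun s => loss A b L (y s)) (∑ n, gradLoss A b L (y t) n * y' n) t := by
  have hres : ∀ m, HasDerivAt (fun s => ∑ n, A m n * y s n ^ L - b m)
      (∑ n, A m n * (L * y t n ^ (L - 1) * y' n)) t := fun m =>
    (HasDerivAt.fun_sum fun n _ => ((hy n).fun_pow L).const_mul (A m n)).sub_const (b m)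
  have hsum := (HasDerivAt.fun_sum (u := univ) fun m _ => (hres m).fun_pow 2).const_mul
    (1 / (2 * (L : ℝ)))
  refine hsum.congr_deriv ?_
  simp only [gradLoss, hadPow, Matrix.mulVec, dotProduct, Matrix.transpose_apply, Pi.sub_apply,
    sum_mul, mul_sum]
  rw [sum_comm]
  refine sum_congr rfl fun m _ => sum_congr rfl fun n _ => ?_
  field_simp
  ring

theorem sum_mul_gradU (r : ℝ) (u : Fin N → ℝ) : ∑ n, u n * gradU A b L r u n = 0 := by
  have hsq : eucNorm u ^ 2 = ∑ n, u n ^ 2 := Real.sq_sqrt (by positivity)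
  by_cases he : eucNorm u = 0
  · simp [gradU, he]
  set g := gradLoss A b L (normVec r u)
  set S := ∑ k, u k * g k
  have hU : ∀ n, gradU A b L r u n = r / eucNorm u * (g n - S / eucNorm u ^ 2 * u n) :=
    fun n => rfl
  calc ∑ n, u n * gradU A b L r u n
      = ∑ n, (r / eucNorm u * (u n * g n) - r / eucNorm u * S / eucNorm u ^ 2 * u n ^ 2) :=
        sum_congr rfl fun n _ => by rw [hU]; ring
    _ = r / eucNorm u * S - r / eucNorm u * S / eucNorm u ^ 2 * eucNorm u ^ 2 := by
        rw [sum_sub_distrib, ← mul_sum, ← mul_sum, hsq]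
    _ = 0 := by field_simp; ring

variable {A b L}

theorem gradR_of_eucNorm_eq_one {u : Fin N → ℝ} (hu : eucNorm u = 1) (r : ℝ) :
    gradR A b L r u = ∑ n, u n * gradLoss A b L (r • u) n := by
  simp [gradR, hu, normVec_of_eucNorm_eq_one hu]

theorem gradU_of_eucNorm_eq_one {u : Fin N → ℝ} (hu : eucNorm u = 1) (r : ℝ) (n : Fin N) :
    gradU A b L r u n = r * (gradLoss A b L (r • u) n -
      (∑ k, u k * gradLoss A b L (r • u) k) * u n) := by
  simp [gradU, hu, normVec_of_eucNorm_eq_one hu]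

end Gradients

/-- The left-hand side is `⟪g, ∂ₜ(r u)⟫` along the weight-normalized flow when `‖u‖₂ = 1`. -/
theorem sum_mul_wnVelocity_le {u g : Fin N → ℝ} (hu : ∑ n, u n ^ 2 = 1) {ηr ηu r m : ℝ}
    (hmr : m ≤ ηr) (hmu : m ≤ ηu * r ^ 2) :
    ∑ n, g n * (-(ηr * ∑ k, u k * g k) * u n +
        r * -(ηu * (r * (g n - (∑ k, u k * g k) * u n)))) ≤ -(m * ∑ n, g n ^ 2) := by
  set S := ∑ k, u k * g k
  have hCS : S ^ 2 ≤ ∑ n, g n ^ 2 := by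
    simpa [hu] using sum_mul_sq_le_sq_mul_sq univ u g
  have hsplit : ∑ n, g n * (-(ηr * S) * u n + r * -(ηu * (r * (g n - S * u n)))) =
      -(ηr * S ^ 2) - ηu * r ^ 2 * (∑ n, g n ^ 2 - S ^ 2) := by
    calc _ = ∑ n, ((ηu * r ^ 2 - ηr) * S * (u n * g n) - ηu * r ^ 2 * g n ^ 2) :=
          sum_congr rfl fun n _ => by ring
      _ = _ := by rw [sum_sub_distrib, ← mul_sum, ← mul_sum]; ring
  rw [hsplit]
  nlinarith [mul_le_mul_of_nonneg_right hmr (sq_nonneg S),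
    mul_le_mul_of_nonneg_right hmu (sub_nonneg.2 hCS)]

theorem sq_mul_card_le_sum_sq {ι : Type*} [Fintype ι] {I : Finset ι} {c : ℝ} (hc : 0 ≤ c)
    {x : ι → ℝ} (hx : ∀ n ∈ I, c ≤ |x n|) : c ^ 2 * I.card ≤ ∑ n, x n ^ 2 :=
  calc c ^ 2 * I.card = ∑ _n ∈ I, c ^ 2 := by rw [sum_const, nsmul_eq_mul, mul_comm]
    _ ≤ ∑ n ∈ I, x n ^ 2 :=
        sum_le_sum fun n hn => by simpa using pow_le_pow_left₀ hc (hx n hn) 2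
    _ ≤ ∑ n, x n ^ 2 := sum_le_univ_sum_of_nonneg fun n => sq_nonneg _

theorem mul_loss_le_sum_sq_gradLoss (A : Matrix (Fin M) (Fin N) ℝ) (b : Fin M → ℝ) {L : ℕ}
    (hL : L ≠ 0) {I : Finset (Fin N)} {σ : ℝ}
    (hfull : ∀ y : Fin M → ℝ, σ ^ 2 * ∑ m, y m ^ 2 ≤ ∑ n ∈ I, A.transpose.mulVec y n ^ 2)
    {c : ℝ} (hc : 0 ≤ c) {x : Fin N → ℝ} (hx : ∀ n ∈ I, c ≤ |x n|) :
    2 * L * c ^ (2 * L - 2) * σ ^ 2 * loss A b L x ≤ ∑ n, gradLoss A b L x n ^ 2 := by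
  set e := A.mulVec (hadPow x L) - b
  have hpow : ∀ n ∈ I, c ^ (2 * L - 2) ≤ (x n ^ 2) ^ (L - 1) := fun n hn => by
    rw [show 2 * L - 2 = 2 * (L - 1) by omega, pow_mul]
    exact pow_le_pow_left₀ (by positivity) (by simpa using pow_le_pow_left₀ hc (hx n hn) 2) _
  calc 2 * L * c ^ (2 * L - 2) * σ ^ 2 * loss A b L x
      = c ^ (2 * L - 2) * (σ ^ 2 * ∑ m, e m ^ 2) := by
        simp only [loss, e, Pi.sub_apply]; field_simp
    _ ≤ c ^ (2 * L - 2) * ∑ n ∈ I, A.transpose.mulVec e n ^ 2 := by gcongr; exact hfull e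
    _ ≤ ∑ n ∈ I, A.transpose.mulVec e n ^ 2 * (x n ^ 2) ^ (L - 1) := by
        rw [mul_sum]
        exact sum_le_sum fun n hn => by rw [mul_comm]; gcongr; exact hpow n hn
    _ = ∑ n ∈ I, gradLoss A b L x n ^ 2 :=
        sum_congr rfl fun n _ => by simp only [gradLoss, e]; ring
    _ ≤ ∑ n, gradLoss A b L x n ^ 2 :=
        sum_le_univ_sum_of_nonneg fun n => sq_nonneg _

theorem le_mul_exp_of_hasDerivAt_le_neg_mul {G G' : ℝ → ℝ} {K t₀ T : ℝ}
    (hG : ∀ t ∈ Icc t₀ T, HasDerivAt G (G' t) t)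
    (hbound : ∀ t ∈ Icc t₀ T, G' t ≤ -K * G t) :
    ∀ t ∈ Icc t₀ T, G t ≤ G t₀ * exp (-(K * (t - t₀))) := by
  intro t ht
  have h := le_gronwallBound_of_liminf_deriv_right_le (K := -K) (ε := 0)
    (fun s hs => (hG s hs).continuousAt.continuousWithinAt)
    (fun s hs _ hr => (hG s (Ico_subset_Icc_self hs)).hasDerivWithinAt.liminf_right_slope_le hr)
    le_rfl (fun s hs => by simpa using hbound s (Ico_subset_Icc_self hs)) t ht
  rwa [gronwallBound_ε0, neg_mul] at h

namespace WNFlow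

variable {A : Matrix (Fin M) (Fin N) ℝ} {b : Fin M → ℝ} {L : ℕ} {ηr ηu r : ℝ → ℝ}
  {u : ℝ → Fin N → ℝ}

theorem eucNorm_eq_one (hflow : WNFlow A b L ηr ηu r u) (h0 : eucNorm (u 0) = 1) {t : ℝ}
    (ht : 0 ≤ t) : eucNorm (u t) = 1 := by
  have hderiv : ∀ s, 0 ≤ s → HasDerivAt (fun s => ∑ n, u s n ^ 2) 0 s := fun s hs => by
    refine (HasDerivAt.fun_sum (u := univ) fun n _ => (hflow.2 s hs n).fun_pow 2).congr_deriv ?_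
    calc _ = -(2 * ηu s) * ∑ n, u s n * gradU A b L (r s) (u s) n := by
          rw [mul_sum]
          exact sum_congr rfl fun n _ => by ring
      _ = 0 := by rw [sum_mul_gradU, mul_zero]
  have hconst := constant_of_has_deriv_right_zero (f := fun s => ∑ n, u s n ^ 2)
    (fun s hs => (hderiv s hs.1).continuousAt.continuousWithinAt)
    (fun s hs => (hderiv s hs.1).hasDerivWithinAt) t ⟨ht, le_rfl⟩
  rw [eucNorm_eq_one_iff] at h0 ⊢
  exact hconst.trans h0

theorem exists_hasDerivAt_loss_le (hflow : WNFlow A b L ηr ηu r u)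
    (hunit : ∀ t, 0 ≤ t → eucNorm (u t) = 1) (hL : L ≠ 0) {t m : ℝ} (ht : 0 ≤ t)
    (hmr : m ≤ ηr t) (hmu : m ≤ ηu t * r t ^ 2) :
    ∃ D, HasDerivAt (fun s => loss A b L (r s • u s)) D t ∧
      D ≤ -(m * ∑ n, gradLoss A b L (r t • u t) n ^ 2) := by
  refine ⟨_, hasDerivAt_loss A b L hL (y := fun s => r s • u s)
    fun n => (hflow.1 t ht).mul (hflow.2 t ht n), ?_⟩
  simp only [gradR_of_eucNorm_eq_one (hunit t ht), gradU_of_eucNorm_eq_one (hunit t ht)]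
  exact sum_mul_wnVelocity_le (eucNorm_eq_one_iff.1 (hunit t ht)) hmr hmu

theorem exists_hasDerivAt_loss_le_neg_mul_loss (hflow : WNFlow A b L ηr ηu r u)
    (hunit : ∀ t, 0 ≤ t → eucNorm (u t) = 1) (hL : L ≠ 0) {t : ℝ} (ht : 0 ≤ t)
    {cr cu cx σ : ℝ} {I : Finset (Fin N)} (hcr : 0 ≤ cr) (hcu : 0 ≤ cu) (hcx : 0 ≤ cx)
    (hηr : cr ≤ ηr t) (hηu : cu ≤ ηu t) (hxI : ∀ n ∈ I, cx ≤ |(r t • u t) n|)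
    (hfull : ∀ y : Fin M → ℝ, σ ^ 2 * ∑ m, y m ^ 2 ≤ ∑ n ∈ I, A.transpose.mulVec y n ^ 2) :
    ∃ D, HasDerivAt (fun s => loss A b L (r s • u s)) D t ∧
      D ≤ -(min cr (cu * cx ^ 2 * I.card) * (2 * L) * cx ^ (2 * L - 2) * σ ^ 2) *
        loss A b L (r t • u t) := by
  have hr : cx ^ 2 * I.card ≤ r t ^ 2 :=
    calc cx ^ 2 * I.card ≤ ∑ n, (r t • u t) n ^ 2 := sq_mul_card_le_sum_sq hcx hxI
      _ = r t ^ 2 := by simp [mul_pow, ← mul_sum, eucNorm_eq_one_iff.1 (hunit t ht)]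
  have hηu' : cu * cx ^ 2 * I.card ≤ ηu t * r t ^ 2 := by
    rw [mul_assoc]
    exact mul_le_mul hηu hr (by positivity) (hcu.trans hηu)
  obtain ⟨D, hD, hDle⟩ := hflow.exists_hasDerivAt_loss_le hunit hL ht
    ((min_le_left _ _).trans hηr) ((min_le_right _ _).trans hηu')
  have hm : 0 ≤ min cr (cu * cx ^ 2 * I.card) := le_min hcr (by positivity)
  have hPL := mul_loss_le_sum_sq_gradLoss A b hL hfull hcx hxI
  refine ⟨D, hD, hDle.trans ?_⟩
  nlinarith [mul_le_mul_of_nonneg_left hPL hm]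

end WNFlow

theorem stmt9_general {M N : ℕ} (L : ℕ)
    (A : Matrix (Fin M) (Fin N) ℝ) (b : Fin M → ℝ)
    (ηr ηu : ℝ → ℝ)
    (r : ℝ → ℝ) (u : ℝ → Fin N → ℝ)
    (hflow : WNFlow A b L ηr ηu r u)
    (hnorm : eucNorm (u 0) = 1)
    (x : ℝ → Fin N → ℝ) (hx : ∀ t, x t = normVec (r t) (u t))
    (t₀ T : ℝ) (ht₀ : 0 ≤ t₀)
    (cr cu cx : ℝ) (hcr : 0 < cr) (hcu : 0 < cu) (hcx : 0 < cx)
    (I : Finset (Fin N))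
    (hηr : ∀ t ∈ Set.Icc t₀ T, cr ≤ ηr t)
    (hηu : ∀ t ∈ Set.Icc t₀ T, cu ≤ ηu t)
    (hxI : ∀ t ∈ Set.Icc t₀ T, ∀ n ∈ I, cx ≤ |x t n|)
    (σ : ℝ)
    (hfull : ∀ y : Fin M → ℝ,
      σ ^ 2 * ∑ m, y m ^ 2 ≤ ∑ n ∈ I, A.transpose.mulVec y n ^ 2) :
    ∀ t ∈ Set.Icc t₀ T,
      loss A b L (x t) ≤ loss A b L (x t₀) *
        Real.exp (-(min cr (cu * cx ^ 2 * (I.card : ℝ)) *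
          (2 * (L : ℝ)) * cx ^ (2 * L - 2) * σ ^ 2 * (t - t₀))) := by
  rcases eq_or_ne L 0 with rfl | hL
  · intro t _
    simp [loss]
  have hunit : ∀ s, 0 ≤ s → eucNorm (u s) = 1 := fun s hs => hflow.eucNorm_eq_one hnorm hs
  have hxs : ∀ s, 0 ≤ s → x s = r s • u s := fun s hs => by
    rw [hx, normVec_of_eucNorm_eq_one (hunit s hs)]
  have hrate : ∀ s ∈ Icc t₀ T, ∃ D, HasDerivAt (fun s => loss A b L (r s • u s)) D s ∧
      D ≤ -(min cr (cu * cx ^ 2 * (I.card : ℝ)) * (2 * L) * cx ^ (2 * L - 2) * σ ^ 2) *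
        loss A b L (r s • u s) := fun s hs =>
    hflow.exists_hasDerivAt_loss_le_neg_mul_loss hunit hL (ht₀.trans hs.1) hcr.le hcu.le hcx.le
      (hηr s hs) (hηu s hs) (hxs s (ht₀.trans hs.1) ▸ hxI s hs) hfull
  choose! D hD hDle using hrate
  intro t ht
  rw [hxs t (ht₀.trans ht.1), hxs t₀ ht₀]
  exact le_mul_exp_of_hasDerivAt_le_neg_mul hD hDle t ht

theorem stmt9 {M N : ℕ} (L : ℕ)
    (A : Matrix (Fin M) (Fin N) ℝ) (b : Fin M → ℝ)
    (ηr ηu : ℝ → ℝ)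
    (r : ℝ → ℝ) (u : ℝ → Fin N → ℝ)
    (hflow : WNFlow A b L ηr ηu r u)
    (hnorm : eucNorm (u 0) = 1)
    (x : ℝ → Fin N → ℝ) (hx : ∀ t, x t = normVec (r t) (u t))
    (t₀ T : ℝ) (ht₀ : 0 ≤ t₀) (hT : t₀ ≤ T)
    (cr cu cx : ℝ) (hcr : 0 < cr) (hcu : 0 < cu) (hcx : 0 < cx)
    (I : Finset (Fin N))
    (hηr : ∀ t ∈ Set.Icc t₀ T, cr ≤ ηr t)
    (hηu : ∀ t ∈ Set.Icc t₀ T, cu ≤ ηu t)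
    (hxI : ∀ t ∈ Set.Icc t₀ T, ∀ n ∈ I, cx ≤ |x t n|)
    (σ : ℝ) (hσ : 0 < σ)
    (hfull : ∀ y : Fin M → ℝ,
      σ ^ 2 * ∑ m, y m ^ 2 ≤ ∑ n ∈ I, A.transpose.mulVec y n ^ 2) :
    ∀ t ∈ Set.Icc t₀ T,
      loss A b L (x t) ≤ loss A b L (x t₀) *
        Real.exp (-(min cr (cu * cx ^ 2 * (I.card : ℝ)) *
          (2 * (L : ℝ)) * cx ^ (2 * L - 2) * σ ^ 2 * (t - t₀))) :=
  stmt9_general L A b ηr ηu r u hflow hnorm x hx t₀ T ht₀ cr cu cx hcr hcu hcx I hηr hηu hxI σ hfull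

end
end

section
/- Let L ∈ ℕ. Suppose (r,u) follows the weight-normalized gradient flow with time-dependent learning rates (η_r, η_u) = (r(t)², 1) and ‖u(0)‖₂ = 1, and set x(t) = (r(t)/‖u(t)‖₂) u(t). Then x satisfies ∂ₜx = −‖x‖₂² · ∇𝓛(x). -/
open Filter Topology

noncomputable section

variable {M N : ℕ}

/-!
The radial component of `∇_u 𝓛̃` vanishes, so `‖u‖₂` is conserved along the flow and stays `1`.
Then `x = r u`, and the product rule gives
`∂ₜx = ∂ₜr · u + r · ∂ₜu = -r² (uᵀ∇𝓛) u - r² (∇𝓛 - (uᵀ∇𝓛) u) = -r² ∇𝓛(x)`,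
while `‖x‖₂ = |r|`.
-/

open Finset

lemma eucNorm_sq (u : Fin N → ℝ) : eucNorm u ^ 2 = ∑ n, u n ^ 2 :=
  Real.sq_sqrt (sum_nonneg fun _ _ => sq_nonneg _)

lemma eucNorm_smul (c : ℝ) (u : Fin N → ℝ) : eucNorm (c • u) = |c| * eucNorm u := by
  simp only [eucNorm, Pi.smul_apply, smul_eq_mul, mul_pow, ← mul_sum]
  rw [Real.sqrt_mul (sq_nonneg c), Real.sqrt_sq_eq_abs]

lemma eucNorm_normVec (r : ℝ) {u : Fin N → ℝ} (hu : eucNorm u ≠ 0) :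
    eucNorm (normVec r u) = |r| := by
  have hpos : 0 ≤ eucNorm u := Real.sqrt_nonneg _
  rw [normVec, eucNorm_smul, abs_div, abs_of_nonneg hpos, div_mul_cancel₀ _ hu]

lemma sum_mul_gradU_eq_zero (A : Matrix (Fin M) (Fin N) ℝ) (b : Fin M → ℝ) (L : ℕ) (r : ℝ)
    (u : Fin N → ℝ) : ∑ n, u n * gradU A b L r u n = 0 := by
  by_cases hu : eucNorm u = 0
  · simp [gradU, hu]
  set g := gradLoss A b L (normVec r u)
  calc ∑ n, u n * gradU A b L r u n
      = r / eucNorm u * (∑ n, u n * g n - (∑ k, u k * g k) / eucNorm u ^ 2 * ∑ n, u n ^ 2) := by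
        simp only [gradU, mul_sum, ← sum_sub_distrib]
        exact sum_congr rfl fun n _ => by ring
    _ = 0 := by rw [← eucNorm_sq, div_mul_cancel₀ _ (pow_ne_zero 2 hu), sub_self, mul_zero]

lemma hasDerivAt_sum_sq_of_sum_mul_eq_zero {v : ℝ → Fin N → ℝ} {v' : Fin N → ℝ} {t : ℝ}
    (hv : ∀ n, HasDerivAt (fun s => v s n) (v' n) t) (horth : ∑ n, v t n * v' n = 0) :
    HasDerivAt (fun s => ∑ n, v s n ^ 2) 0 t := by
  have h := HasDerivAt.fun_sum (u := univ) fun n _ => (hv n).pow 2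
  rwa [show ∑ n, ((2 : ℕ) : ℝ) * v t n ^ (2 - 1) * v' n = 0 by
    simp only [mul_assoc, ← mul_sum, Nat.add_one_sub_one, pow_one, horth, mul_zero]] at h

lemma eq_of_hasDerivAt_zero_of_nonneg {f : ℝ → ℝ} (hf : ∀ t, 0 ≤ t → HasDerivAt f 0 t)
    {t : ℝ} (ht : 0 ≤ t) : f t = f 0 :=
  constant_of_has_deriv_right_zero
    (fun s hs => (hf s hs.1).continuousAt.continuousWithinAt)
    (fun s hs => (hf s hs.1).hasDerivWithinAt) t ⟨ht, le_rfl⟩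

namespace WNFlow

variable {A : Matrix (Fin M) (Fin N) ℝ} {b : Fin M → ℝ} {L : ℕ} {ηr ηu : ℝ → ℝ}
  {r : ℝ → ℝ} {u : ℝ → Fin N → ℝ} {t : ℝ}

theorem hasDerivAt_sum_sq (h : WNFlow A b L ηr ηu r u) (ht : 0 ≤ t) :
    HasDerivAt (fun s => ∑ n, u s n ^ 2) 0 t :=
  hasDerivAt_sum_sq_of_sum_mul_eq_zero (h.2 t ht) <| by
    simp only [mul_neg, sum_neg_distrib, mul_left_comm (u t _), ← mul_sum,
      sum_mul_gradU_eq_zero, mul_zero, neg_zero]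

theorem eucNorm_eq (h : WNFlow A b L ηr ηu r u) (ht : 0 ≤ t) :
    eucNorm (u t) = eucNorm (u 0) :=
  congrArg Real.sqrt (eq_of_hasDerivAt_zero_of_nonneg (fun _ hs => h.hasDerivAt_sum_sq hs) ht)

theorem hasDerivAt_eucNorm (h : WNFlow A b L ηr ηu r u) (ht : 0 ≤ t) (hu : eucNorm (u t) ≠ 0) :
    HasDerivAt (fun s => eucNorm (u s)) 0 t := by
  have hsum : ∑ n, u t n ^ 2 ≠ 0 := fun h0 => hu (by rw [eucNorm, h0, Real.sqrt_zero])
  simpa [eucNorm] using (h.hasDerivAt_sum_sq ht).sqrt hsum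

theorem hasDerivAt_normVec (h : WNFlow A b L ηr ηu r u) (ht : 0 ≤ t) (hu : eucNorm (u t) = 1)
    (n : Fin N) :
    HasDerivAt (fun s => normVec (r s) (u s) n)
      (-(ηr t * gradR A b L (r t) (u t)) * u t n - r t * (ηu t * gradU A b L (r t) (u t) n)) t := by
  have hu0 : eucNorm (u t) ≠ 0 := by rw [hu]; exact one_ne_zero
  refine (((h.1 t ht).fun_div (h.hasDerivAt_eucNorm ht hu0) hu0).fun_mul
    (h.2 t ht n)).congr_deriv ?_
  simp only [hu]
  ring

end WNFlow

theorem stmt17 {M N : ℕ} (L : ℕ)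
    (A : Matrix (Fin M) (Fin N) ℝ) (b : Fin M → ℝ)
    (r : ℝ → ℝ) (u : ℝ → Fin N → ℝ)
    (hflow : WNFlow A b L (fun t => r t ^ 2) (fun _ => 1) r u)
    (hnorm : eucNorm (u 0) = 1)
    (x : ℝ → Fin N → ℝ) (hx : ∀ t, x t = normVec (r t) (u t)) :
    ∀ t, 0 ≤ t → ∀ n,
      HasDerivAt (fun s => x s n) (-(eucNorm (x t) ^ 2 * gradLoss A b L (x t) n)) t := by
  intro t ht n
  have hu : eucNorm (u t) = 1 := (hflow.eucNorm_eq ht).trans hnorm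
  simp only [hx]
  rw [eucNorm_normVec _ (by rw [hu]; exact one_ne_zero), sq_abs]
  convert hflow.hasDerivAt_normVec ht hu n using 1
  simp only [gradR, gradU, hu, div_one, one_pow]
  ring

end
end
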